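/- (Polarisation-type computation of the main theorem on equations for the generalised Humbert locus.) Let g, k be integers with 0 < k and 2k ≤ g, and let d₁, …, d_k be positive integers with d_i dividing d_{i+1} for i = 1, …, k−1. Let Z = (z_{ij}) ∈ ℍ_g satisfy z_{ij} = d_i · z_{(g+1−i) j} for all 1 ≤ i, j ≤ k, and z_{ij} = 0 for all k+1 ≤ i ≤ g−k and 1 ≤ j ≤ k. Let Z_M = (z_{ij})_{1 ≤ i,j ≤ k} be the upper-left k×k block of Z, and let P be the real g×k matrix with entries P_{i,i} = 1 and P_{g+1−i, i} = 1/d_i for 1 ≤ i ≤ k and all other entries 0. Then Z_M ∈ ℍ_k (i.e. Z_M is symmetric and Im Z_M is positive definite), and Pᵀ (Im Z)⁻¹ P · (Im Z_M) = I_k; equivalently, Pᵀ (Im Z)⁻¹ P = (Im Z_M)⁻¹. (This says the polarisation of ℂ^g/Λ_Z given by (Im Z)⁻¹ restricts under the embedding with matrix P to a polarisation of type (d₁, …, d_k).) -/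

import Mathlib

/-!
Write `Y = Im Z` and let `S` be the `g × k` matrix of the inclusion of the first `k`
coordinates, so that `Im Z_M = Sᵀ Y S`. The Humbert equations say precisely that the first
`k` columns of `Y` are `P · Im Z_M`: the top rows are `Im Z_M` itself, the middle rows vanish
and the bottom row `g - 1 - i` is `1 / dᵢ` times row `i`. Hence `Y⁻¹ P (Im Z_M) = S`, and
`Pᵀ S = 1` because the top `k × k` block of `P` is the identity. Symmetry and positivity of
`Im Z_M` are inherited from `Z`, since it is a principal submatrix.
-/

namespace Matrix

variable {R : Type*} [CommRing R] {n ι : Type*} [Fintype n] [DecidableEq n] [Fintype ι]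
  [DecidableEq ι]

theorem transpose_mul_inv_mul_mul_eq_one {Y : Matrix n n R} (hY : IsUnit Y)
    {P : Matrix n ι R} {M : Matrix ι ι R} {c : ι → n}
    (hcols : Y.submatrix id c = P * M) (hrows : P.submatrix c id = 1) :
    Pᵀ * Y⁻¹ * P * M = 1 := by
  have hYinv : Y⁻¹ * Y = 1 := nonsing_inv_mul Y ((isUnit_iff_isUnit_det Y).mp hY)
  calc Pᵀ * Y⁻¹ * P * M = Pᵀ * (Y⁻¹ * Y.submatrix id c) := by
        rw [hcols, Matrix.mul_assoc, Matrix.mul_assoc]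
    _ = (Pᵀ * (Y⁻¹ * Y)).submatrix id c := by
        rw [submatrix_mul _ _ _ id _ Function.bijective_id,
          submatrix_mul _ _ _ id _ Function.bijective_id, submatrix_id_id, submatrix_id_id]
    _ = 1 := by
        rw [hYinv, Matrix.mul_one, ← transpose_submatrix, hrows, transpose_one]

end Matrix

open Matrix

section Humbert

variable {k g : ℕ} {d : ℕ → ℕ}

/-- Indices are 0-based, so the paper's row `g + 1 - i` is row `g - 1 - j` here (`j = i - 1`). -/
def humbertEmbedding (K : Type*) [DivisionRing K] (g k : ℕ) (d : ℕ → ℕ) :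
    Matrix (Fin g) (Fin k) K :=
  of fun r j => if (r : ℕ) = j then 1 else if (r : ℕ) = g - 1 - j then 1 / (d j : K) else 0

def SatisfiesHumbertEquations {R : Type*} [NonAssocSemiring R] (k : ℕ) (d : ℕ → ℕ)
    (Z : Matrix (Fin g) (Fin g) R) : Prop :=
  (∀ i j : Fin g, (i : ℕ) < k → (j : ℕ) < k →
      Z i j = d i * Z ⟨g - 1 - i, by omega⟩ j) ∧
    ∀ i j : Fin g, k ≤ (i : ℕ) → (i : ℕ) < g - k → (j : ℕ) < k → Z i j = 0

theorem SatisfiesHumbertEquations.map {R S : Type*} [NonAssocSemiring R] [NonAssocSemiring S]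
    {Z : Matrix (Fin g) (Fin g) R} (hZ : SatisfiesHumbertEquations k d Z) (f : R →+ S) :
    SatisfiesHumbertEquations k d (Z.map f) := by
  refine ⟨fun i j hi hj => ?_, fun i j hi hi' hj => ?_⟩
  · simp only [map_apply, hZ.1 i j hi hj, ← nsmul_eq_mul, map_nsmul]
  · simp only [map_apply, hZ.2 i j hi hi' hj, map_zero]

theorem SatisfiesHumbertEquations.apply_mirror {R : Type*} [NonAssocSemiring R]
    {Z : Matrix (Fin g) (Fin g) R} (hZ : SatisfiesHumbertEquations k d Z) (r j : Fin g)
    (hr : g - k ≤ (r : ℕ)) (hj : (j : ℕ) < k) :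
    Z ⟨g - 1 - r, by omega⟩ j = d (g - 1 - r) * Z r j := by
  have h := hZ.1 ⟨g - 1 - r, by omega⟩ j (show g - 1 - (r : ℕ) < k by omega) hj
  rwa [show (⟨g - 1 - (g - 1 - r), by omega⟩ : Fin g) = r from Fin.ext (by dsimp only; omega)]
    at h

variable {K : Type*} [DivisionRing K]

theorem humbertEmbedding_row_of_lt (hkg : 2 * k ≤ g) (r : Fin g) (hr : (r : ℕ) < k) :
    humbertEmbedding K g k d r = Pi.single ⟨r, hr⟩ 1 := by
  ext j
  simp only [humbertEmbedding, of_apply, Pi.single_apply, Fin.ext_iff]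
  split_ifs <;> first | rfl | omega

theorem humbertEmbedding_row_of_lt_sub (r : Fin g) (hr : k ≤ (r : ℕ))
    (hr' : (r : ℕ) < g - k) :
    humbertEmbedding K g k d r = 0 := by
  ext j
  simp only [humbertEmbedding, of_apply, Pi.zero_apply]
  split_ifs <;> first | rfl | omega

theorem humbertEmbedding_row_of_sub_le (hkg : 2 * k ≤ g) (r : Fin g) (hr : g - k ≤ (r : ℕ)) :
    humbertEmbedding K g k d r =
      Pi.single ⟨g - 1 - r, by omega⟩ (1 / (d (g - 1 - r) : K)) := by
  ext j
  simp only [humbertEmbedding, of_apply, Pi.single_apply, Fin.ext_iff]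
  split_ifs <;> first | rfl | omega | congr

theorem humbertEmbedding_submatrix_castLE (hkg : 2 * k ≤ g) :
    (humbertEmbedding K g k d).submatrix (Fin.castLE (by omega : k ≤ g)) id = 1 := by
  ext i j
  rw [submatrix_apply, humbertEmbedding_row_of_lt hkg (Fin.castLE _ i) i.isLt, one_eq_pi_single]
  rfl

theorem SatisfiesHumbertEquations.submatrix_id_castLE {Y : Matrix (Fin g) (Fin g) K}
    (hY : SatisfiesHumbertEquations k d Y) (hkg : 2 * k ≤ g) (hd : ∀ i < k, (d i : K) ≠ 0) :
    Y.submatrix id (Fin.castLE (by omega : k ≤ g)) =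
      humbertEmbedding K g k d *
        Y.submatrix (Fin.castLE (by omega : k ≤ g)) (Fin.castLE (by omega : k ≤ g)) := by
  ext r j
  rw [submatrix_apply, mul_apply']
  obtain hr | hr := lt_or_ge (r : ℕ) k
  · rw [humbertEmbedding_row_of_lt hkg r hr, single_dotProduct, one_mul]
    rfl
  obtain hr' | hr' := lt_or_ge (r : ℕ) (g - k)
  · rw [humbertEmbedding_row_of_lt_sub r hr hr', zero_dotProduct]
    exact hY.2 r _ hr hr' j.isLt
  · rw [humbertEmbedding_row_of_sub_le hkg r hr', single_dotProduct]
    change Y r (Fin.castLE _ j) = _ * Y ⟨g - 1 - r, by omega⟩ (Fin.castLE _ j)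
    rw [hY.apply_mirror r _ hr' j.isLt, one_div, inv_mul_cancel_left₀ (hd _ (by omega))]

end Humbert

/-- Polarisation-type computation of the main theorem on equations for the
generalised Humbert locus: for `Z ∈ ℍ_g` satisfying the Humbert equations,
the upper-left `k×k` block `Z_M` lies in `ℍ_k`, and with `P` the real `g×k`
matrix of the embedding (`P_{i,i} = 1`, `P_{g+1-i,i} = 1/d_i`, other entries
`0`) one has `Pᵀ (Im Z)⁻¹ P · (Im Z_M) = I_k`.
(Indices here are 0-based: `i`-th 1-based becomes `i-1`.) -/
theorem humbert_equations_polarisation_type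
    (g k : ℕ) (hkg : 2 * k ≤ g)
    (d : ℕ → ℕ) (hd : ∀ i < k, 0 < d i)
    (Z : Matrix (Fin g) (Fin g) ℂ)
    (hZsymm : Z.IsSymm) (hZpos : (Z.map Complex.im).PosDef)
    (heq1 : ∀ i j : Fin g, (i : ℕ) < k → (j : ℕ) < k →
      Z i j = (d i : ℂ) * Z ⟨g - 1 - (i : ℕ), by omega⟩ j)
    (heq2 : ∀ i j : Fin g, k ≤ (i : ℕ) → (i : ℕ) < g - k → (j : ℕ) < k →
      Z i j = 0) :
    let ZM : Matrix (Fin k) (Fin k) ℂ :=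
      Matrix.of fun i j : Fin k => Z (Fin.castLE (by omega) i) (Fin.castLE (by omega) j)
    let P : Matrix (Fin g) (Fin k) ℝ :=
      Matrix.of fun r : Fin g => fun j : Fin k =>
        if (r : ℕ) = (j : ℕ) then 1
        else if (r : ℕ) = g - 1 - (j : ℕ) then (1 : ℝ) / (d j : ℝ)
        else 0
    ZM.IsSymm ∧ (ZM.map Complex.im).PosDef ∧
      P.transpose * (Z.map Complex.im)⁻¹ * P * (ZM.map Complex.im) = 1 := by
  intro ZM P
  have hY : SatisfiesHumbertEquations k d (Z.map Complex.im) :=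
    SatisfiesHumbertEquations.map (d := d) ⟨heq1, heq2⟩ Complex.imAddGroupHom
  have hd' : ∀ i < k, (d i : ℝ) ≠ 0 := fun i hi => Nat.cast_ne_zero.mpr (hd i hi).ne'
  exact ⟨hZsymm.submatrix _, hZpos.submatrix (Fin.castLE_injective _),
    transpose_mul_inv_mul_mul_eq_one hZpos.isUnit (hY.submatrix_id_castLE hkg hd')
      (humbertEmbedding_submatrix_castLE hkg)⟩
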